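/- (Theorem 3.4(ii), convergence of optimal values.) Let n ≥ 1, ε > 0, let Ω̄ ⊆ ℝ^d be nonempty and compact, and let A(x) := f₁(x)A₁ + ⋯ + f_κ(x)A_κ. Let (𝒱_k)_{k≥1} be nonzero linear subspaces of ℂⁿ with 𝒱_k ⊆ 𝒱_{k+1} for all k ≥ 1, and let (x^(k))_{k≥2} be points of Ω̄ such that for every k ≥ 2: (a) α^{𝒱_{k−1}}_ε(A(x^(k))) ≤ α^{𝒱_{k−1}}_ε(A(x)) for all x ∈ Ω̄; and (b) α^{𝒱_k}_ε(A(x^(k))) = α_ε(A(x^(k))). Assume further: (c) Λ^{𝒱_1}_ε(A(x)) ≠ ∅ for every x ∈ Ω̄; (d) there exist ζ > 0 and φ > 0 such that for every k ≥ 2 and all x, y ∈ Ω̄ with ‖x − x^(k)‖ ≤ φ and ‖y − x^(k)‖ ≤ φ one has |α^{𝒱_k}_ε(A(x)) − α^{𝒱_k}_ε(A(y))| ≤ ζ‖x − y‖; and (e) the map x ↦ α_ε(A(x)) is continuous on Ω̄. Then the sequence of optimal values of the reduced problems converges to the globally minimal value of the original problem: lim_{k→∞} α^{𝒱_k}_ε(A(x^(k+1)))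 = inf{α_ε(A(x)) : x ∈ Ω̄}. -/

import Mathlib

noncomputable def enorm2 {ι : Type*} [Fintype ι] (v : ι → ℂ) : ℝ :=
  ‖(WithLp.equiv 2 (ι → ℂ)).symm v‖

noncomputable def sigMin {ι κ : Type*} [Fintype ι] [Fintype κ] (M : Matrix ι κ ℂ) : ℝ :=
  sInf {r : ℝ | ∃ w : κ → ℂ, enorm2 w = 1 ∧ r = enorm2 (M.mulVec w)}

noncomputable def sigV {n : ℕ} (𝒱 : Submodule ℂ (Fin n → ℂ))
    (A : Matrix (Fin n) (Fin n) ℂ) (z : ℂ) : ℝ :=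
  sInf {r : ℝ | ∃ v ∈ 𝒱, enorm2 v = 1 ∧ r = enorm2 ((A - z • 1).mulVec v)}

noncomputable def pspec {n : ℕ} (ε : ℝ) (A : Matrix (Fin n) (Fin n) ℂ) : Set ℂ :=
  {z | sigMin (A - z • 1) ≤ ε}

noncomputable def psa {n : ℕ} (ε : ℝ) (A : Matrix (Fin n) (Fin n) ℂ) : ℝ :=
  sSup (Complex.re '' pspec ε A)

noncomputable def pspecV {n : ℕ} (ε : ℝ) (𝒱 : Submodule ℂ (Fin n → ℂ))
    (A : Matrix (Fin n) (Fin n) ℂ) : Set ℂ :=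
  {z | sigV 𝒱 A z ≤ ε}

noncomputable def psaV {n : ℕ} (ε : ℝ) (𝒱 : Submodule ℂ (Fin n → ℂ))
    (A : Matrix (Fin n) (Fin n) ℂ) : ℝ :=
  sSup (Complex.re '' pspecV ε 𝒱 A)

noncomputable def Amap {n d κ : ℕ} (f : Fin κ → EuclideanSpace ℝ (Fin d) → ℝ)
    (As : Fin κ → Matrix (Fin n) (Fin n) ℂ) (x : EuclideanSpace ℝ (Fin d)) :
    Matrix (Fin n) (Fin n) ℂ :=
  ∑ j, (f j x : ℂ) • As j

noncomputable def opNorm2 {n : ℕ} (Δ : Matrix (Fin n) (Fin n) ℂ) : ℝ :=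
  sSup {r : ℝ | ∃ w : Fin n → ℂ, enorm2 w = 1 ∧ r = enorm2 (Δ.mulVec w)}

/-!
The reduced optimal values `F k (x (k + 1))`, `F k := α^{𝒱_k}_ε ∘ A`, are nondecreasing: enlarging
the subspace enlarges the reduced pseudospectrum, and `x (k + 1)` minimises `F k`. They stay below
`inf P`, `P := α_ε ∘ A`, because reduced pseudospectra lie inside the full one. For the reverse
inequality, compactness gives iterates `x m`, `x l` with `m < l` as close as we like, and then
`inf P ≤ P (x m) = F m (x m) ≤ F m (x l) + ζ ‖x m - x l‖ ≤ F (l - 1) (x l) + η`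
by interpolation at `x m`, the uniform Lipschitz bound and monotonicity in the subspace; the last
term is the optimal value at index `l - 1`.
-/

open Filter Topology
open scoped Matrix

section EuclideanNorm

variable {ι : Type*} [Fintype ι]

lemma enorm2_eq_norm (v : ι → ℂ) : enorm2 v = ‖WithLp.toLp 2 v‖ := rfl

lemma enorm2_nonneg (v : ι → ℂ) : 0 ≤ enorm2 v := norm_nonneg _

lemma enorm2_smul (c : ℂ) (v : ι → ℂ) : enorm2 (c • v) = ‖c‖ * enorm2 v :=
  norm_smul c (WithLp.toLp 2 v)

lemma enorm2_sub_enorm2_le (v w : ι → ℂ) : enorm2 v - enorm2 w ≤ enorm2 (v - w) :=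
  norm_sub_norm_le (WithLp.toLp 2 v) (WithLp.toLp 2 w)

lemma enorm2_sub_comm (v w : ι → ℂ) : enorm2 (v - w) = enorm2 (w - v) :=
  norm_sub_rev (WithLp.toLp 2 v) (WithLp.toLp 2 w)

lemma Submodule.exists_mem_enorm2_eq_one {V : Submodule ℂ (ι → ℂ)} (hV : V ≠ ⊥) :
    ∃ v ∈ V, enorm2 v = 1 := by
  obtain ⟨v, hv, hv0⟩ := V.exists_mem_ne_zero_of_ne_bot hV
  have hnorm : enorm2 v ≠ 0 := by simpa [enorm2_eq_norm] using hv0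
  refine ⟨(enorm2 v : ℂ)⁻¹ • v, V.smul_mem _ hv, ?_⟩
  rw [enorm2_smul, norm_inv, Complex.norm_real, Real.norm_of_nonneg (enorm2_nonneg v),
    inv_mul_cancel₀ hnorm]

lemma exists_enorm2_eq_one [Nonempty ι] : ∃ w : ι → ℂ, enorm2 w = 1 := by
  obtain ⟨w, -, hw⟩ := Submodule.exists_mem_enorm2_eq_one (V := (⊤ : Submodule ℂ (ι → ℂ)))
    top_ne_bot
  exact ⟨w, hw⟩

lemma Matrix.exists_enorm2_mulVec_le {κ : Type*} [Fintype κ] [DecidableEq κ]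
    (A : Matrix ι κ ℂ) : ∃ C, ∀ w, enorm2 (A *ᵥ w) ≤ C * enorm2 w := by
  let L := LinearMap.toContinuousLinearMap (Matrix.toEuclideanLin A)
  refine ⟨‖L‖, fun w => ?_⟩
  have hL : L (WithLp.toLp 2 w) = WithLp.toLp 2 (A *ᵥ w) := by simp [L]
  simpa only [hL, enorm2_eq_norm] using L.le_opNorm (WithLp.toLp 2 w)

end EuclideanNorm

section Pseudospectra

variable {n : ℕ} {ε : ℝ} {𝒱 𝒲 : Submodule ℂ (Fin n → ℂ)} (A : Matrix (Fin n) (Fin n) ℂ)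

lemma sigMin_le_sigV (h𝒱 : 𝒱 ≠ ⊥) (z : ℂ) : sigMin (A - z • 1) ≤ sigV 𝒱 A z := by
  obtain ⟨v, hv, hv1⟩ := Submodule.exists_mem_enorm2_eq_one h𝒱
  refine csInf_le_csInf ⟨0, ?_⟩ ⟨_, v, hv, hv1, rfl⟩ ?_
  · rintro _ ⟨w, -, rfl⟩
    exact enorm2_nonneg _
  · rintro _ ⟨v, -, hv1, rfl⟩
    exact ⟨v, hv1, rfl⟩

lemma sigV_anti (h : 𝒱 ≤ 𝒲) (h𝒱 : 𝒱 ≠ ⊥) (z : ℂ) : sigV 𝒲 A z ≤ sigV 𝒱 A z := by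
  obtain ⟨v, hv, hv1⟩ := Submodule.exists_mem_enorm2_eq_one h𝒱
  refine csInf_le_csInf ⟨0, ?_⟩ ⟨_, v, hv, hv1, rfl⟩ ?_
  · rintro _ ⟨w, -, -, rfl⟩
    exact enorm2_nonneg _
  · rintro _ ⟨v, hv, hv1, rfl⟩
    exact ⟨v, h hv, hv1, rfl⟩

lemma pspecV_subset_pspec (h𝒱 : 𝒱 ≠ ⊥) : pspecV ε 𝒱 A ⊆ pspec ε A :=
  fun z hz => (sigMin_le_sigV A h𝒱 z).trans hz

lemma pspecV_mono (h : 𝒱 ≤ 𝒲) (h𝒱 : 𝒱 ≠ ⊥) : pspecV ε 𝒱 A ⊆ pspecV ε 𝒲 A :=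
  fun z hz => (sigV_anti A h h𝒱 z).trans hz

lemma exists_norm_sub_le_sigMin (hn : 1 ≤ n) : ∃ C, ∀ z : ℂ, ‖z‖ - C ≤ sigMin (A - z • 1) := by
  have : Nonempty (Fin n) := ⟨⟨0, hn⟩⟩
  obtain ⟨C, hC⟩ := A.exists_enorm2_mulVec_le
  obtain ⟨w₀, hw₀⟩ := exists_enorm2_eq_one (ι := Fin n)
  refine ⟨C, fun z => le_csInf ⟨_, w₀, hw₀, rfl⟩ ?_⟩
  rintro _ ⟨w, hw, rfl⟩
  calc ‖z‖ - C ≤ enorm2 (z • w) - enorm2 (A *ᵥ w) := by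
        rw [enorm2_smul, hw, mul_one]
        gcongr
        simpa [hw] using hC w
    _ ≤ enorm2 (z • w - A *ᵥ w) := enorm2_sub_enorm2_le _ _
    _ = enorm2 ((A - z • 1) *ᵥ w) := by
        rw [enorm2_sub_comm, Matrix.sub_mulVec, Matrix.smul_mulVec, Matrix.one_mulVec]

lemma bddAbove_re_pspec (hn : 1 ≤ n) : BddAbove (Complex.re '' pspec ε A) := by
  obtain ⟨C, hC⟩ := exists_norm_sub_le_sigMin A hn
  refine ⟨ε + C, ?_⟩
  rintro _ ⟨z, hz, rfl⟩
  linarith [Complex.re_le_norm z, hC z, show sigMin (A - z • 1) ≤ ε from hz]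

variable {A}

lemma psaV_le_psa (hn : 1 ≤ n) (h𝒱 : 𝒱 ≠ ⊥) (hne : (pspecV ε 𝒱 A).Nonempty) :
    psaV ε 𝒱 A ≤ psa ε A :=
  csSup_le_csSup (bddAbove_re_pspec A hn) (hne.image _)
    (Set.image_mono (pspecV_subset_pspec A h𝒱))

lemma psaV_mono (hn : 1 ≤ n) (h : 𝒱 ≤ 𝒲) (h𝒱 : 𝒱 ≠ ⊥) (hne : (pspecV ε 𝒱 A).Nonempty) :
    psaV ε 𝒱 A ≤ psaV ε 𝒲 A :=
  csSup_le_csSup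
    ((bddAbove_re_pspec A hn).mono
      (Set.image_mono (pspecV_subset_pspec A (ne_bot_of_le_ne_bot h𝒱 h))))
    (hne.image _) (Set.image_mono (pspecV_mono A h h𝒱))

end Pseudospectra

lemma IsCompact.exists_lt_dist_lt {X : Type*} [PseudoMetricSpace X] {s : Set X}
    (hs : IsCompact s) {u : ℕ → X} (hu : ∀ i, u i ∈ s) {r : ℝ} (hr : 0 < r) :
    ∃ i j, i < j ∧ dist (u i) (u j) < r := by
  obtain ⟨a, -, ψ, hψ, hlim⟩ := hs.tendsto_subseq hu
  obtain ⟨N, hN⟩ := Metric.cauchySeq_iff'.1 hlim.cauchySeq r hr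
  exact ⟨ψ N, ψ (N + 1), hψ N.lt_succ_self, dist_comm (u (ψ N)) _ ▸ hN (N + 1) N.le_succ⟩

section SubspaceFramework

variable {X : Type*} {Ω : Set X} {F : ℕ → X → ℝ} {P : X → ℝ} {x : ℕ → X}

lemma reduced_min_mono (hxΩ : ∀ k, 2 ≤ k → x k ∈ Ω)
    (hmono : ∀ k, 1 ≤ k → ∀ y ∈ Ω, F k y ≤ F (k + 1) y)
    (hmin : ∀ k, 1 ≤ k → ∀ y ∈ Ω, F k (x (k + 1)) ≤ F k y) {k l : ℕ} (hk : 1 ≤ k)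
    (hkl : k ≤ l) : F k (x (k + 1)) ≤ F l (x (l + 1)) := by
  refine Nat.rel_of_forall_rel_succ_of_le_of_le (· ≤ ·)
    (f := fun m => F m (x (m + 1))) (fun m hm => ?_) hk hkl
  have hx : x (m + 2) ∈ Ω := hxΩ (m + 2) (by omega)
  exact (hmin m hm _ hx).trans (hmono m hm _ hx)

lemma exists_reduced_min_add_ge [PseudoMetricSpace X] (hΩ : IsCompact Ω)
    (hxΩ : ∀ k, 2 ≤ k → x k ∈ Ω)
    (hmono : ∀ k, 1 ≤ k → ∀ y ∈ Ω, F k y ≤ F (k + 1) y)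
    (hle : ∀ k, 1 ≤ k → ∀ y ∈ Ω, F k y ≤ P y)
    (hmin : ∀ k, 1 ≤ k → ∀ y ∈ Ω, F k (x (k + 1)) ≤ F k y)
    (hinterp : ∀ k, 2 ≤ k → F k (x k) = P (x k))
    (hlip : ∃ ζ > (0 : ℝ), ∃ φ > (0 : ℝ), ∀ k, 2 ≤ k → ∀ y ∈ Ω, ∀ y' ∈ Ω,
      dist y (x k) ≤ φ → dist y' (x k) ≤ φ → |F k y - F k y'| ≤ ζ * dist y y')
    {η : ℝ} (hη : 0 < η) : ∃ k, 1 ≤ k ∧ sInf (P '' Ω) ≤ F k (x (k + 1)) + η := by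
  obtain ⟨ζ, hζ, φ, hφ, hlip⟩ := hlip
  obtain ⟨i, j, hij, hd⟩ := hΩ.exists_lt_dist_lt (u := fun i => x (i + 2))
    (fun i => hxΩ (i + 2) (by omega)) (lt_min hφ (div_pos hη hζ))
  have hxi := hxΩ (i + 2) (by omega)
  have hxj := hxΩ (j + 2) (by omega)
  have hbdd : BddBelow (P '' Ω) :=
    ⟨F 1 (x 2), Set.forall_mem_image.2 fun y hy =>
      (hmin 1 le_rfl y hy).trans (hle 1 le_rfl y hy)⟩
  have hlip_ij : |F (i + 2) (x (i + 2)) - F (i + 2) (x (j + 2))|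
      ≤ ζ * dist (x (i + 2)) (x (j + 2)) :=
    hlip (i + 2) (by omega) _ hxi _ hxj (by simp [hφ.le])
      (dist_comm (x (i + 2)) _ ▸ hd.le.trans (min_le_left _ _))
  have hζd : ζ * dist (x (i + 2)) (x (j + 2)) ≤ η :=
    ((lt_div_iff₀' hζ).1 (hd.trans_le (min_le_right _ _))).le
  refine ⟨j + 1, by omega, ?_⟩
  calc sInf (P '' Ω) ≤ P (x (i + 2)) := csInf_le hbdd (Set.mem_image_of_mem P hxi)
    _ = F (i + 2) (x (i + 2)) := (hinterp (i + 2) (by omega)).symm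
    _ ≤ F (i + 2) (x (j + 2)) + ζ * dist (x (i + 2)) (x (j + 2)) := by
        linarith [le_abs_self (F (i + 2) (x (i + 2)) - F (i + 2) (x (j + 2))), hlip_ij]
    _ ≤ F (j + 1) (x (j + 2)) + η := by
        gcongr
        exact Nat.rel_of_forall_rel_succ_of_le_of_le (· ≤ ·) (f := (F · (x (j + 2))))
          (fun m hm => hmono m hm _ hxj) (by omega) (by omega)

theorem tendsto_reduced_min [PseudoMetricSpace X] (hΩ : IsCompact Ω)
    (hxΩ : ∀ k, 2 ≤ k → x k ∈ Ω)
    (hmono : ∀ k, 1 ≤ k → ∀ y ∈ Ω, F k y ≤ F (k + 1) y)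
    (hle : ∀ k, 1 ≤ k → ∀ y ∈ Ω, F k y ≤ P y)
    (hmin : ∀ k, 1 ≤ k → ∀ y ∈ Ω, F k (x (k + 1)) ≤ F k y)
    (hinterp : ∀ k, 2 ≤ k → F k (x k) = P (x k))
    (hlip : ∃ ζ > (0 : ℝ), ∃ φ > (0 : ℝ), ∀ k, 2 ≤ k → ∀ y ∈ Ω, ∀ y' ∈ Ω,
      dist y (x k) ≤ φ → dist y' (x k) ≤ φ → |F k y - F k y'| ≤ ζ * dist y y') :
    Tendsto (fun k => F k (x (k + 1))) atTop (𝓝 (sInf (P '' Ω))) := by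
  refine tendsto_order.2 ⟨fun a ha => ?_, fun a ha => ?_⟩
  · obtain ⟨k, hk, hgap⟩ := exists_reduced_min_add_ge hΩ hxΩ hmono hle hmin hinterp hlip
      (half_pos (sub_pos.2 ha))
    filter_upwards [eventually_ge_atTop k] with l hkl
    linarith [reduced_min_mono hxΩ hmono hmin hk hkl]
  · filter_upwards [eventually_ge_atTop 1] with k hk
    refine lt_of_le_of_lt (le_csInf ⟨_, Set.mem_image_of_mem P (hxΩ 2 le_rfl)⟩ ?_) ha
    exact Set.forall_mem_image.2 fun y hy => (hmin k hk y hy).trans (hle k hk y hy)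

end SubspaceFramework

theorem stmt2_general {n d κ : ℕ} (hn : 1 ≤ n) {ε : ℝ}
    (Ω : Set (EuclideanSpace ℝ (Fin d))) (hΩc : IsCompact Ω)
    (f : Fin κ → EuclideanSpace ℝ (Fin d) → ℝ) (As : Fin κ → Matrix (Fin n) (Fin n) ℂ)
    (𝒱 : ℕ → Submodule ℂ (Fin n → ℂ)) (h𝒱bot : ∀ k, 1 ≤ k → 𝒱 k ≠ ⊥)
    (h𝒱mono : ∀ k, 1 ≤ k → 𝒱 k ≤ 𝒱 (k + 1))
    (x : ℕ → EuclideanSpace ℝ (Fin d)) (hxΩ : ∀ k, 2 ≤ k → x k ∈ Ω)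
    (hmin : ∀ k, 2 ≤ k → ∀ y ∈ Ω,
      psaV ε (𝒱 (k - 1)) (Amap f As (x k)) ≤ psaV ε (𝒱 (k - 1)) (Amap f As y))
    (hinterp : ∀ k, 2 ≤ k → psaV ε (𝒱 k) (Amap f As (x k)) = psa ε (Amap f As (x k)))
    (hne : ∀ y ∈ Ω, (pspecV ε (𝒱 1) (Amap f As y)).Nonempty)
    (hlip : ∃ ζ > (0 : ℝ), ∃ φ > (0 : ℝ), ∀ k, 2 ≤ k → ∀ y ∈ Ω, ∀ y' ∈ Ω,
      ‖y - x k‖ ≤ φ → ‖y' - x k‖ ≤ φ →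
      |psaV ε (𝒱 k) (Amap f As y) - psaV ε (𝒱 k) (Amap f As y')| ≤ ζ * ‖y - y'‖) :
    Filter.Tendsto (fun k => psaV ε (𝒱 k) (Amap f As (x (k + 1)))) Filter.atTop
      (nhds (sInf ((fun y => psa ε (Amap f As y)) '' Ω))) := by
  have hne_k : ∀ k, 1 ≤ k → ∀ y ∈ Ω, (pspecV ε (𝒱 k) (Amap f As y)).Nonempty := by
    intro k hk y hy
    induction k, hk using Nat.le_induction with
    | base => exact hne y hy
    | succ k hk ih => exact ih.mono (pspecV_mono _ (h𝒱mono k hk) (h𝒱bot k hk))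
  refine tendsto_reduced_min (F := fun k y => psaV ε (𝒱 k) (Amap f As y))
    (P := fun y => psa ε (Amap f As y)) hΩc hxΩ
    (fun k hk y hy => psaV_mono hn (h𝒱mono k hk) (h𝒱bot k hk) (hne_k k hk y hy))
    (fun k hk y hy => psaV_le_psa hn (h𝒱bot k hk) (hne_k k hk y hy))
    (fun k hk y hy => by simpa using hmin (k + 1) (by omega) y hy) hinterp ?_
  simpa only [dist_eq_norm] using hlip

theorem stmt2 {n d κ : ℕ} (hn : 1 ≤ n) {ε : ℝ} (hε : 0 < ε)
    (Ω : Set (EuclideanSpace ℝ (Fin d))) (hΩne : Ω.Nonempty) (hΩc : IsCompact Ω)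
    (f : Fin κ → EuclideanSpace ℝ (Fin d) → ℝ) (As : Fin κ → Matrix (Fin n) (Fin n) ℂ)
    (𝒱 : ℕ → Submodule ℂ (Fin n → ℂ)) (h𝒱bot : ∀ k, 1 ≤ k → 𝒱 k ≠ ⊥)
    (h𝒱mono : ∀ k, 1 ≤ k → 𝒱 k ≤ 𝒱 (k + 1))
    (x : ℕ → EuclideanSpace ℝ (Fin d)) (hxΩ : ∀ k, 2 ≤ k → x k ∈ Ω)
    (hmin : ∀ k, 2 ≤ k → ∀ y ∈ Ω,
      psaV ε (𝒱 (k - 1)) (Amap f As (x k)) ≤ psaV ε (𝒱 (k - 1)) (Amap f As y))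
    (hinterp : ∀ k, 2 ≤ k → psaV ε (𝒱 k) (Amap f As (x k)) = psa ε (Amap f As (x k)))
    (hne : ∀ y ∈ Ω, (pspecV ε (𝒱 1) (Amap f As y)).Nonempty)
    (hlip : ∃ ζ > (0 : ℝ), ∃ φ > (0 : ℝ), ∀ k, 2 ≤ k → ∀ y ∈ Ω, ∀ y' ∈ Ω,
      ‖y - x k‖ ≤ φ → ‖y' - x k‖ ≤ φ →
      |psaV ε (𝒱 k) (Amap f As y) - psaV ε (𝒱 k) (Amap f As y')| ≤ ζ * ‖y - y'‖)
    (hcont : ContinuousOn (fun y => psa ε (Amap f As y)) Ω) :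
    Filter.Tendsto (fun k => psaV ε (𝒱 k) (Amap f As (x (k + 1)))) Filter.atTop
      (nhds (sInf ((fun y => psa ε (Amap f As y)) '' Ω))) :=
  stmt2_general hn Ω hΩc f As 𝒱 h𝒱bot h𝒱mono x hxΩ hmin hinterp hne hlip
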